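/- If a configuration η is stabilizable in a finite set V by some acceptable sequence of topplings, then there exists a sequence of topplings contained in V that is both legal for η and stabilizes η in V. -/

import Mathlib

/-!
Induction on the length of the acceptable stabilizing sequence `α`. If `η` is not yet stable in
`V`, pick an unstable site `x ∈ V`. Topplings at other sites can only add particles to `x`, so `x`
occurs in `α`. Topplings at two distinct sites that both carry a particle commute (adding a
particle commutes with removing one and with `n ↦ n·ρ` on nonzero values), so the first
occurrence of `x` can be moved to the front of `α`. Toppling `x` first is legal, and the rest of
`α` is a shorter acceptable sequence stabilizing the toppled configuration in `V`.
-/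

namespace ARW

/-- The state of a site: `nat n` means `n` active particles, `rho` means one passive particle. -/
inductive Nrho where
  | nat : ℕ → Nrho
  | rho : Nrho
deriving DecidableEq

namespace Nrho

/-- Numerical value used to define the order `0 < ρ < 1 < 2 < ⋯`. -/
def val : Nrho → ℚ
  | nat n => (n : ℚ)
  | rho => 1/2

instance : LE Nrho := ⟨fun a b => a.val ≤ b.val⟩
instance : LT Nrho := ⟨fun a b => a.val < b.val⟩

/-- Adding one particle: `ρ + 1 = 2`. -/
def addOne : Nrho → Nrho
  | nat n => nat (n + 1)
  | rho => nat 2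

/-- Removing one particle (junk value on `0`): `ρ - 1 = 0`. -/
def subOne : Nrho → Nrho
  | nat n => nat (n - 1)
  | rho => nat 0

/-- The sleep operation `n ↦ n·ρ`: `1·ρ = ρ`, `n·ρ = n` for `n ≥ 2`, `ρ·ρ = ρ`
(junk value on `0`). -/
def sleep : Nrho → Nrho
  | nat 0 => nat 0
  | nat 1 => rho
  | nat (n + 2) => nat (n + 2)
  | rho => rho

end Nrho

/-- An instruction at a site: jump to a given site, or fall asleep. -/
inductive Instr (S : Type) where
  | jump : S → Instr S
  | sleep : Instr S
deriving DecidableEq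

/-- A configuration of the activated random walk system. -/
abbrev Config (S : Type) := S → Nrho

/-- A field of instructions `(τ^{x,j})`. -/
abbrev IField (S : Type) := S → ℕ → Instr S

variable {S : Type} [DecidableEq S]

/-- Apply one instruction at site `x`. -/
def applyInstr : Instr S → S → Config S → Config S
  | .jump y, x, η =>
      let η' := Function.update η x (η x).subOne
      Function.update η' y (η' y).addOne
  | .sleep, x, η => Function.update η x (η x).sleep

/-- Topple site `x`: use the next unused instruction at `x` and increment the odometer. -/
def topple (I : IField S) : Config S × (S → ℕ) → S → Config S × (S → ℕ)
  | (η, h), x => (applyInstr (I x (h x)) x η, Function.update h x (h x + 1))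

/-- Topple a finite sequence of sites, in order. -/
def toppleSeq (I : IField S) : Config S × (S → ℕ) → List S → Config S × (S → ℕ)
  | s, [] => s
  | s, x :: α => toppleSeq I (topple I s x) α

/-- `Phi I η α` is the configuration `Φ_α η` obtained from `η` by toppling
the sequence `α` (starting with odometer `0`). -/
def Phi (I : IField S) (η : Config S) (α : List S) : Config S :=
  (toppleSeq I (η, fun _ => 0) α).1

/-- The sequence `α` is acceptable from the state `(η, h)`: each toppled site has value `≥ ρ`,
i.e. different from `0`, when it is toppled. -/
def AcceptableFrom (I : IField S) : Config S × (S → ℕ) → List S → Prop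
  | _, [] => True
  | (η, h), x :: α => η x ≠ Nrho.nat 0 ∧ AcceptableFrom I (topple I (η, h) x) α

/-- The sequence `α` is legal from the state `(η, h)`: each toppled site is unstable,
i.e. has value `≥ 1`, when it is toppled. -/
def LegalFrom (I : IField S) : Config S × (S → ℕ) → List S → Prop
  | _, [] => True
  | (η, h), x :: α => Nrho.nat 1 ≤ η x ∧ LegalFrom I (topple I (η, h) x) α

/-- `α` is an acceptable sequence of topplings for the configuration `η`. -/
def Acceptable (I : IField S) (η : Config S) (α : List S) : Prop :=
  AcceptableFrom I (η, fun _ => 0) α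

/-- `α` is a legal sequence of topplings for the configuration `η`. -/
def Legal (I : IField S) (η : Config S) (α : List S) : Prop :=
  LegalFrom I (η, fun _ => 0) α

/-- Site `x` is stable for `η` if it carries no active particle. -/
def Stable (η : Config S) (x : S) : Prop := η x ≤ Nrho.rho

/-- `η` is stable in `V` if every site of `V` is stable. -/
def StableIn (η : Config S) (V : Finset S) : Prop := ∀ x ∈ V, Stable η x

end ARW

namespace ARW

namespace Nrho

theorem addOne_ne_zero (a : Nrho) : a.addOne ≠ nat 0 := by
  cases a <;> simp [addOne]

theorem subOne_addOne {a : Nrho} (h : a ≠ nat 0) : a.subOne.addOne = a.addOne.subOne := by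
  rcases a with (_ | n) | _ <;> simp_all [subOne, addOne]

theorem sleep_addOne {a : Nrho} (h : a ≠ nat 0) : a.sleep.addOne = a.addOne.sleep := by
  rcases a with (_ | _ | n) | _ <;> simp_all [sleep, addOne]

theorem one_le_addOne (a : Nrho) : nat 1 ≤ a.addOne := by
  change (1 : ℚ) ≤ _
  cases a <;> simp [addOne, val]

theorem ne_zero_of_one_le {a : Nrho} (h : nat 1 ≤ a) : a ≠ nat 0 := by
  rintro rfl
  exact absurd (show (1 : ℚ) ≤ 0 from h) (by norm_num)

theorem one_le_iff_not_le_rho {a : Nrho} : nat 1 ≤ a ↔ ¬ a ≤ rho := by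
  change (1 : ℚ) ≤ a.val ↔ ¬ a.val ≤ 1 / 2
  rcases a with (_ | n) | _ <;> norm_num [val]
  linarith [(n.cast_nonneg : (0 : ℚ) ≤ n)]

end Nrho

variable {S : Type} [DecidableEq S]

theorem applyInstr_comm {x y : S} (hxy : x ≠ y) (i j : Instr S) {η : Config S}
    (hx : η x ≠ .nat 0) (hy : η y ≠ .nat 0) :
    applyInstr j y (applyInstr i x η) = applyInstr i x (applyInstr j y η) := by
  funext z
  cases i <;> cases j <;> simp only [applyInstr, Function.update_apply] <;> split_ifs <;>
    subst_vars <;> simp_all [Nrho.subOne_addOne, Nrho.sleep_addOne, Nrho.addOne_ne_zero]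

theorem applyInstr_apply_of_ne (i : Instr S) {x z : S} (η : Config S) (hzx : z ≠ x) :
    applyInstr i x η z = η z ∨ applyInstr i x η z = (η z).addOne := by
  cases i with
  | jump y =>
    by_cases hzy : z = y
    · subst hzy
      simp [applyInstr, hzx]
    · simp [applyInstr, hzx, hzy]
  | sleep => simp [applyInstr, hzx]

variable (I : IField S)

theorem acceptableFrom_cons (s : Config S × (S → ℕ)) (x : S) (l : List S) :
    AcceptableFrom I s (x :: l) ↔ s.1 x ≠ .nat 0 ∧ AcceptableFrom I (topple I s x) l :=
  Iff.rfl

theorem legalFrom_cons (s : Config S × (S → ℕ)) (x : S) (l : List S) :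
    LegalFrom I s (x :: l) ↔ .nat 1 ≤ s.1 x ∧ LegalFrom I (topple I s x) l :=
  Iff.rfl

theorem topple_comm {x y : S} (hxy : x ≠ y) {s : Config S × (S → ℕ)}
    (hx : s.1 x ≠ .nat 0) (hy : s.1 y ≠ .nat 0) :
    topple I (topple I s x) y = topple I (topple I s y) x := by
  obtain ⟨η, h⟩ := s
  simp only [topple]
  rw [Function.update_of_ne hxy.symm, Function.update_of_ne hxy, applyInstr_comm hxy _ _ hx hy,
    Function.update_comm hxy]

theorem topple_apply_of_ne (s : Config S × (S → ℕ)) {x z : S} (hzx : z ≠ x) :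
    (topple I s x).1 z = s.1 z ∨ (topple I s x).1 z = (s.1 z).addOne :=
  applyInstr_apply_of_ne _ _ hzx

theorem topple_ne_zero_of_ne {s : Config S × (S → ℕ)} {x z : S} (hzx : z ≠ x)
    (h : s.1 z ≠ .nat 0) : (topple I s x).1 z ≠ .nat 0 := by
  rcases topple_apply_of_ne I s hzx with e | e <;> rw [e]
  exacts [h, Nrho.addOne_ne_zero _]

theorem one_le_topple_of_ne {s : Config S × (S → ℕ)} {x z : S} (hzx : z ≠ x)
    (h : .nat 1 ≤ s.1 z) : .nat 1 ≤ (topple I s x).1 z := by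
  rcases topple_apply_of_ne I s hzx with e | e <;> rw [e]
  exacts [h, Nrho.one_le_addOne _]

theorem one_le_toppleSeq_of_not_mem {x : S} {α : List S} (hx : x ∉ α)
    {s : Config S × (S → ℕ)} (h : .nat 1 ≤ s.1 x) : .nat 1 ≤ (toppleSeq I s α).1 x := by
  induction α generalizing s with
  | nil => exact h
  | cons y α ih =>
    rw [List.mem_cons, not_or] at hx
    exact ih hx.2 (one_le_topple_of_ne I hx.1 h)

theorem mem_of_stable_toppleSeq {x : S} {α : List S} {s : Config S × (S → ℕ)}
    (h : .nat 1 ≤ s.1 x) (hstab : Stable (toppleSeq I s α).1 x) : x ∈ α := by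
  by_contra hx
  exact Nrho.one_le_iff_not_le_rho.1 (one_le_toppleSeq_of_not_mem I hx h) hstab

theorem AcceptableFrom.move_front {x : S} {γ : List S} (hxγ : x ∉ γ) {δ : List S}
    {s : Config S × (S → ℕ)} (hx : s.1 x ≠ .nat 0) (hacc : AcceptableFrom I s (γ ++ x :: δ)) :
    AcceptableFrom I s (x :: (γ ++ δ)) ∧
      toppleSeq I s (γ ++ x :: δ) = toppleSeq I s (x :: (γ ++ δ)) := by
  induction γ generalizing s with
  | nil => exact ⟨hacc, rfl⟩
  | cons y γ ih =>
    rw [List.mem_cons, not_or] at hxγ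
    obtain ⟨hy, hacc⟩ := (acceptableFrom_cons I _ _ _).1 hacc
    obtain ⟨hacc', heq⟩ := ih hxγ.2 (topple_ne_zero_of_ne I hxγ.1 hx) hacc
    have hcomm := topple_comm I hxγ.1 hx hy
    refine ⟨(acceptableFrom_cons I _ _ _).2 ⟨hx, (acceptableFrom_cons I _ _ _).2
      ⟨topple_ne_zero_of_ne I (Ne.symm hxγ.1) hy, ?_⟩⟩, ?_⟩
    · rw [hcomm]
      exact ((acceptableFrom_cons I _ _ _).1 hacc').2
    · show toppleSeq I (topple I s y) (γ ++ x :: δ)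
        = toppleSeq I (topple I (topple I s x) y) (γ ++ δ)
      rw [heq, hcomm]
      rfl

theorem exists_legalFrom_stableIn (V : Finset S) (α : List S) (s : Config S × (S → ℕ))
    (hα : AcceptableFrom I s α) (hstab : StableIn (toppleSeq I s α).1 V) :
    ∃ β, LegalFrom I s β ∧ (∀ x ∈ β, x ∈ V) ∧ StableIn (toppleSeq I s β).1 V := by
  by_cases hs : StableIn s.1 V
  · exact ⟨[], trivial, List.forall_mem_nil _, hs⟩
  obtain ⟨x, hxV, hx⟩ : ∃ x ∈ V, .nat 1 ≤ s.1 x := by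
    simpa [StableIn, Stable, Nrho.one_le_iff_not_le_rho] using hs
  obtain ⟨γ, δ, hxγ, rfl, -⟩ :=
    List.exists_erase_eq (mem_of_stable_toppleSeq I hx (hstab x hxV))
  obtain ⟨hacc, heq⟩ := hα.move_front I hxγ (Nrho.ne_zero_of_one_le hx)
  obtain ⟨β, hβ, hβV, hβstab⟩ := exists_legalFrom_stableIn V (γ ++ δ) (topple I s x)
    ((acceptableFrom_cons I _ _ _).1 hacc).2 (heq ▸ hstab)
  exact ⟨x :: β, (legalFrom_cons I _ _ _).2 ⟨hx, hβ⟩, List.forall_mem_cons.2 ⟨hxV, hβV⟩, hβstab⟩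
termination_by α.length
decreasing_by simp_all

end ARW

open ARW in
/-- If `η` is stabilizable in the finite set `V` by some acceptable sequence of topplings,
then there is a sequence of topplings contained in `V` which is legal for `η`
and stabilizes `η` in `V`. -/
theorem exists_legal_stabilizing {S : Type} [DecidableEq S] (I : IField S) (η : Config S)
    (V : Finset S) (α : List S)
    (hα : Acceptable I η α) (hstab : StableIn (Phi I η α) V) :
    ∃ β : List S, Legal I η β ∧ (∀ x ∈ β, x ∈ V) ∧ StableIn (Phi I η β) V :=
  exists_legalFrom_stableIn I V α _ hα hstab
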